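/- arXiv:1904.10507 — 2 statements merged into one kernel-verified Lean document; each statement's English description precedes it below -/
import Mathlib

section
/- Let d ≥ 1 and let f : ℝ^d → ℝ be componentwise subadditive (in each variable, the variable now ranging over all of ℝ) and Lebesgue measurable. Then f is bounded on every compact subset of ℝ^d. -/
/-!
Here `B R` is the closed ball of `ι → ℝ`, i.e. the cube `[-R, R]^d` (sup norm).

Upper bound on `B R`: by measurability there is an `n` with `f ≤ n` on `B (2R)` outside a
set `W` of measure less than `vol (B R) / 2 ^ d`. The `2 ^ d` maps `x ↦ (x i or z i - x i)ᵢ`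
preserve volume, so for `z ∈ B R` some `x ∈ B R` has all these points outside `W`; they lie in
`B (2R)`, and splitting `z i = x i + (z i - x i)` coordinate by coordinate gives `f z ≤ 2 ^ d * n`.

Lower bound: removing the coordinates of `x` one at a time gives `f 0 ≤ f x + d * C`, where `C`
bounds `f` above on the ball.
-/

open MeasureTheory Metric Function Finset

variable {ι : Type*} [Fintype ι] [DecidableEq ι]

def ComponentwiseSubadditive (f : (ι → ℝ) → ℝ) : Prop :=
  ∀ (i : ι) (x : ι → ℝ) (y : ℝ), f (update x i (x i + y)) ≤ f x + f (update x i y)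

theorem exists_nat_measure_inter_lt {α : Type*} [MeasurableSpace α] {μ : Measure α}
    {f : α → ℝ} (hf : AEMeasurable f μ) {s : Set α} (hs : NullMeasurableSet s μ) (hμs : μ s ≠ ⊤)
    {ε : ENNReal} (hε : 0 < ε) : ∃ n : ℕ, μ (s ∩ {x | n < f x}) < ε := by
  have hempty : ⋂ n : ℕ, s ∩ {x | n < f x} = ∅ :=
    Set.iInter_eq_empty_iff.2 fun x => (exists_nat_ge (f x)).imp fun _ hn hx => hn.not_gt hx.2
  have hlim := tendsto_measure_iInter_atTop (μ := μ) (s := fun n : ℕ => s ∩ {x | n < f x})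
    (fun n => hs.inter (hf.nullMeasurableSet_preimage measurableSet_Ioi))
    (fun m n hmn => Set.inter_subset_inter_right s fun x (hx : (n : ℝ) < f x) =>
      show (m : ℝ) < f x from (Nat.cast_le.2 hmn).trans_lt hx)
    ⟨0, measure_ne_top_of_subset Set.inter_subset_left hμs⟩
  rw [hempty, measure_empty] at hlim
  exact (hlim.eventually_lt_const hε).exists

theorem measurePreserving_piecewise_sub (z : ι → ℝ) (S : Finset ι) :
    MeasurePreserving (fun x => S.piecewise x (z - x)) volume volume := by
  refine volume_preserving_pi (f := fun i t => if i ∈ S then t else z i - t) fun i => ?_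
  by_cases hi : i ∈ S
  · simp only [hi, if_true]
    exact MeasurePreserving.id volume
  · simpa [hi] using Measure.measurePreserving_sub_left volume (z i)

theorem exists_mem_forall_mem_pi_notMem (z : ι → ℝ) {I W : Set (ι → ℝ)}
    (hW : 2 ^ Fintype.card ι * volume W < volume I) :
    ∃ x ∈ I, ∀ v ∈ Set.univ.pi fun i => ({x i, z i - x i} : Set ℝ), v ∉ W := by
  set bad := ⋃ S : Finset ι, (fun x => S.piecewise x (z - x)) ⁻¹' W
  have hbad : volume bad < volume I := calc
    volume bad ≤ ∑ S : Finset ι, volume ((fun x => S.piecewise x (z - x)) ⁻¹' W) :=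
      measure_iUnion_fintype_le _ _
    _ ≤ ∑ _S : Finset ι, volume W :=
      sum_le_sum fun S _ => (measurePreserving_piecewise_sub z S).measure_preimage_le W
    _ = 2 ^ Fintype.card ι * volume W := by simp [Fintype.card_finset]
    _ < volume I := hW
  obtain ⟨x, hxI, hxbad⟩ := Set.not_subset.1 fun h => (measure_mono h).not_gt hbad
  refine ⟨x, hxI, fun v hv hvW => hxbad (Set.mem_iUnion.2 ⟨univ.filter fun i => v i = x i, ?_⟩)⟩
  rw [Set.mem_preimage]
  convert hvW using 1
  funext i
  by_cases hi : v i = x i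
  · simp [hi]
  · simp [hi, ((hv i trivial).resolve_left hi).symm]

namespace ComponentwiseSubadditive

variable {f : (ι → ℝ) → ℝ}

theorem le_two_pow_mul (hf : ComponentwiseSubadditive f) {x z : ι → ℝ} {c : ℝ}
    (hc : ∀ v ∈ Set.univ.pi fun i => ({x i, z i - x i} : Set ℝ), f v ≤ c) :
    f z ≤ 2 ^ Fintype.card ι * c := by
  have hsplitAll : ∀ t : Finset ι, ∀ v ∈ Set.univ.pi fun i => ({x i, z i - x i} : Set ℝ),
      f (t.piecewise z v) ≤ 2 ^ t.card * c := by
    intro t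
    induction t using Finset.induction_on with
    | empty => simpa using hc
    | insert a t ha ih =>
      intro v hv
      have hupdate : ∀ y ∈ ({x a, z a - x a} : Set ℝ),
          f (update (t.piecewise z v) a y) ≤ 2 ^ t.card * c := fun y hy => by
        rw [update_piecewise_of_notMem _ _ _ ha]
        exact ih _ ((Set.update_mem_pi_iff_of_mem hv).2 fun _ => hy)
      have hsplit := hf a (update (t.piecewise z v) a (x a)) (z a - x a)
      simp only [update_self, update_idem, add_sub_cancel] at hsplit
      calc f ((insert a t).piecewise z v)
          ≤ f (update (t.piecewise z v) a (x a)) + f (update (t.piecewise z v) a (z a - x a)) := by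
            rwa [piecewise_insert]
        _ ≤ 2 ^ t.card * c + 2 ^ t.card * c :=
          add_le_add (hupdate _ (Or.inl rfl)) (hupdate _ (Or.inr rfl))
        _ = 2 ^ (insert a t).card * c := by rw [card_insert_of_notMem ha]; ring
  simpa using hsplitAll univ x fun i _ => Or.inl rfl

theorem exists_forall_closedBall_le (hf : ComponentwiseSubadditive f)
    (hmeas : AEMeasurable f volume) {R : ℝ} (hR : 0 < R) :
    ∃ C, ∀ z ∈ closedBall (0 : ι → ℝ) R, f z ≤ C := by
  have hε : 0 < volume (closedBall (0 : ι → ℝ) R) / 2 ^ Fintype.card ι :=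
    ENNReal.div_pos (measure_closedBall_pos _ _ hR).ne' (ENNReal.pow_ne_top ENNReal.ofNat_ne_top)
  obtain ⟨n, hn⟩ := exists_nat_measure_inter_lt (s := closedBall 0 (2 * R)) hmeas
    measurableSet_closedBall.nullMeasurableSet measure_closedBall_lt_top.ne hε
  refine ⟨2 ^ Fintype.card ι * n, fun z hz => ?_⟩
  obtain ⟨x, hx, hxW⟩ := exists_mem_forall_mem_pi_notMem z (ENNReal.mul_lt_of_lt_div' hn)
  refine hf.le_two_pow_mul fun v hv => not_lt.1 fun hlt => hxW v hv ⟨?_, hlt⟩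
  rw [mem_closedBall_zero_iff] at hx hz ⊢
  refine (pi_norm_le_iff_of_nonneg (by positivity)).2 fun i => ?_
  have hxi := (norm_le_pi_norm x i).trans hx
  obtain h | h : v i = x i ∨ v i = z i - x i := hv i trivial <;> rw [h]
  · linarith
  · linarith [norm_sub_le (z i) (x i), (norm_le_pi_norm z i).trans hz]

theorem apply_zero_le (hf : ComponentwiseSubadditive f) {R C : ℝ}
    (hC : ∀ z ∈ closedBall (0 : ι → ℝ) R, f z ≤ C) {x : ι → ℝ} (hx : x ∈ closedBall 0 R) :
    f 0 ≤ f x + Fintype.card ι * C := by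
  rw [mem_closedBall_zero_iff] at hx
  have hzeroOut : ∀ t : Finset ι, f (t.piecewise 0 x) ≤ f x + t.card * C := by
    intro t
    induction t using Finset.induction_on with
    | empty => simp
    | insert a t ha ih =>
      have hsplit := hf a (t.piecewise 0 x) (-x a)
      rw [piecewise_eq_of_notMem _ _ _ ha, add_neg_cancel] at hsplit
      have hbound : f (update (t.piecewise 0 x) a (-x a)) ≤ C := by
        refine hC _ (mem_closedBall_zero_iff.2 <|
          (pi_norm_le_iff_of_nonneg ((norm_nonneg x).trans hx)).2 fun i => ?_)
        refine le_trans ?_ ((norm_le_pi_norm x i).trans hx)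
        rcases eq_or_ne i a with rfl | hia
        · simp
        · by_cases hit : i ∈ t <;> simp [hia, hit]
      rw [piecewise_insert, Pi.zero_apply, card_insert_of_notMem ha]
      push_cast
      linarith
  simpa using hzeroOut univ

end ComponentwiseSubadditive

theorem componentwise_subadditive_bounded_on_compacts_general
    (d : ℕ) (f : (Fin d → ℝ) → ℝ)
    (hf : ∀ (i : Fin d) (x : Fin d → ℝ) (y : ℝ),
      f (Function.update x i (x i + y)) ≤ f x + f (Function.update x i y))
    (hmeas : AEMeasurable f volume) :
    ∀ K : Set (Fin d → ℝ), IsCompact K → ∃ M : ℝ, ∀ x ∈ K, |f x| ≤ M := by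
  intro K hK
  obtain ⟨R, hR, hKR⟩ := hK.isBounded.subset_closedBall_lt 0 0
  obtain ⟨C, hC⟩ := ComponentwiseSubadditive.exists_forall_closedBall_le hf hmeas hR
  refine ⟨max C (d * C - f 0), fun x hx => abs_le.2 ⟨?_, (hC x (hKR hx)).trans (le_max_left _ _)⟩⟩
  have h0 := ComponentwiseSubadditive.apply_zero_le hf hC (hKR hx)
  rw [Fintype.card_fin] at h0
  linarith [le_max_right C (d * C - f 0)]

/-- A componentwise subadditive (in each variable ranging over all of `ℝ`),
Lebesgue-measurable function `f : ℝ^d → ℝ` is bounded on every compact subset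
of `ℝ^d`. -/
theorem componentwise_subadditive_bounded_on_compacts
    (d : ℕ) (hd : 1 ≤ d) (f : (Fin d → ℝ) → ℝ)
    (hf : ∀ (i : Fin d) (x : Fin d → ℝ) (y : ℝ),
      f (Function.update x i (x i + y)) ≤ f x + f (Function.update x i y))
    (hmeas : AEMeasurable f volume) :
    ∀ K : Set (Fin d → ℝ), IsCompact K → ∃ M : ℝ, ∀ x ∈ K, |f x| ≤ M :=
  componentwise_subadditive_bounded_on_compacts_general d f hf hmeas
end

section
/- Let d ≥ 1, let w ∈ {0,1}^d, and let ℝ_w = {x ∈ ℝ^d : x_i > 0 if w_i = 0, x_i < 0 if w_i = 1} be the corresponding open orthant. If f : ℝ_w → ℝ is componentwise subadditive and Lebesgue measurable, then f is bounded on every compact subset of ℝ_w. -/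
open Filter MeasureTheory Topology

section Aux

open Function Finset ENNReal

variable {d : ℕ} {f : (Fin d → ℝ) → ℝ}

/-- iterated subadditivity along one coordinate -/
lemma csub_scale
    (hf : ∀ (i : Fin d) (x : Fin d → ℝ) (y : ℝ), (∀ j, 0 < x j) → 0 < y →
      f (Function.update x i (x i + y)) ≤ f x + f (Function.update x i y))
    (k : ℕ) (hk : 1 ≤ k) (x : Fin d → ℝ) (hx : ∀ j, 0 < x j) (i : Fin d)
    (s : ℝ) (hs : 0 < s) :
    f (Function.update x i ((k : ℝ) * s)) ≤ (k : ℝ) * f (Function.update x i s) := by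
  induction k, hk using Nat.le_induction with
  | base => simp
  | succ k hk ih =>
    set z := Function.update x i ((k : ℝ) * s) with hz
    have hzpos : ∀ j, 0 < z j := by
      intro j
      rcases eq_or_ne j i with rfl | hji
      · rw [hz, Function.update_self]
        positivity
      · rw [hz, Function.update_of_ne hji]; exact hx j
    have h1 := hf i z s hzpos hs
    rw [hz, Function.update_self, Function.update_idem, Function.update_idem] at h1
    have h2 : ((k : ℝ) + 1) * s = (k : ℝ) * s + s := by ring
    push_cast
    rw [h2]
    calc f (Function.update x i ((k:ℝ) * s + s))
        ≤ f (Function.update x i ((k:ℝ) * s)) + f (Function.update x i s) := h1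
      _ ≤ (k : ℝ) * f (Function.update x i s) + f (Function.update x i s) := by linarith
      _ = ((k : ℝ) + 1) * f (Function.update x i s) := by ring

/-- mix inequality -/
lemma csub_mix
    (hf : ∀ (i : Fin d) (x : Fin d → ℝ) (y : ℝ), (∀ j, 0 < x j) → 0 < y →
      f (Function.update x i (x i + y)) ≤ f x + f (Function.update x i y))
    (T : Finset (Fin d)) :
    ∀ (x y : Fin d → ℝ), (∀ j, 0 < x j) → (∀ j, 0 < y j) →
      f (fun j => if j ∈ T then x j + y j else x j)
        ≤ ∑ S ∈ T.powerset, f (fun j => if j ∈ S then y j else x j) := by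
  classical
  induction T using Finset.induction_on with
  | empty =>
    intro x y hx hy
    simp
  | @insert i T hiT ih =>
    intro x y hx hy
    set q : Fin d → ℝ := fun j => if j ∈ T then x j + y j else x j with hq
    have hqpos : ∀ j, 0 < q j := by
      intro j; rw [hq]; dsimp only
      split
      · exact add_pos (hx j) (hy j)
      · exact hx j
    have hqi : q i = x i := by rw [hq]; simp [hiT]
    have hp : (fun j => if j ∈ insert i T then x j + y j else x j)
        = Function.update q i (q i + y i) := by
      funext j
      rcases eq_or_ne j i with rfl | hji
      · rw [Function.update_self, hqi]; simp
      · rw [Function.update_of_ne hji, hq]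
        simp [Finset.mem_insert, hji]
    have h1 := hf i q (y i) hqpos (hy i)
    set x' : Fin d → ℝ := Function.update x i (y i) with hx'
    have hx'pos : ∀ j, 0 < x' j := by
      intro j
      rcases eq_or_ne j i with rfl | hji
      · rw [hx', Function.update_self]; exact hy j
      · rw [hx', Function.update_of_ne hji]; exact hx j
    have hupd : Function.update q i (y i) = fun j => if j ∈ T then x' j + y j else x' j := by
      funext j
      rcases eq_or_ne j i with rfl | hji
      · rw [Function.update_self, hx']; simp [hiT]
      · rw [Function.update_of_ne hji, hq, hx']
        simp [Function.update_of_ne hji]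
    have h2 := ih x y hx hy
    have h3 := ih x' y hx'pos hy
    have hmix : ∀ S ∈ T.powerset,
        (fun j => if j ∈ S then y j else x' j)
          = fun j => if j ∈ insert i S then y j else x j := by
      intro S hS
      rw [Finset.mem_powerset] at hS
      have hiS : i ∉ S := fun h => hiT (hS h)
      funext j
      rcases eq_or_ne j i with rfl | hji
      · simp [hiS, hx']
      · simp [Finset.mem_insert, hji, hx', Function.update_of_ne hji]
    rw [Finset.sum_powerset_insert hiT]
    calc f (fun j => if j ∈ insert i T then x j + y j else x j)
        = f (Function.update q i (q i + y i)) := by rw [hp]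
      _ ≤ f q + f (Function.update q i (y i)) := h1
      _ ≤ (∑ S ∈ T.powerset, f (fun j => if j ∈ S then y j else x j))
            + ∑ S ∈ T.powerset, f (fun j => if j ∈ S then y j else x' j) := by
          rw [hupd] at *
          exact add_le_add h2 h3
      _ = (∑ S ∈ T.powerset, f (fun j => if j ∈ S then y j else x j))
            + ∑ S ∈ T.powerset, f (fun j => if j ∈ insert i S then y j else x j) := by
          congr 1
          exact Finset.sum_congr rfl fun S hS => by rw [hmix S hS]

lemma csub_box_bound (hd : 1 ≤ d)
    (hf : ∀ (i : Fin d) (x : Fin d → ℝ) (y : ℝ), (∀ j, 0 < x j) → 0 < y →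
      f (Function.update x i (x i + y)) ≤ f x + f (Function.update x i y))
    (hmeas : AEMeasurable f (volume.restrict {x : Fin d → ℝ | ∀ i, 0 < x i}))
    {α : ℝ} (hα : 0 < α) :
    ∃ C : ℝ, 0 ≤ C ∧ ∀ t : Fin d → ℝ, (∀ i, α / 2 < t i ∧ t i ≤ α) → f t ≤ C := by
  classical
  haveI : Nonempty (Fin d) := ⟨⟨0, hd⟩⟩
  set P : Set (Fin d → ℝ) := {x | ∀ i, 0 < x i} with hP
  set g := hmeas.mk f with hgdef
  have hg : Measurable g := hmeas.measurable_mk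
  have hfg : f =ᵐ[volume.restrict P] g := hmeas.ae_eq_mk
  have hnull : (volume.restrict P) {x | ¬ f x = g x} = 0 := hfg
  obtain ⟨D, hDsub, hDmeas, hD0⟩ := exists_measurable_superset_of_null hnull
  have hDvol : volume (D ∩ P) = 0 := by
    rwa [Measure.restrict_apply hDmeas] at hD0
  set Q : Set (Fin d → ℝ) := Set.pi Set.univ (fun _ => Set.Ioc (0:ℝ) α) with hQ
  have hQmeas : MeasurableSet Q := MeasurableSet.univ_pi fun _ => measurableSet_Ioc
  have hQP : Q ⊆ P := by
    intro x hx i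
    exact (hx i (Set.mem_univ i)).1
  have hQvol : volume Q = ENNReal.ofReal α ^ d := by
    rw [hQ, volume_pi_pi]
    simp [Real.volume_Ioc, hα.le]
  have hQfin : volume Q ≠ ⊤ := by
    rw [hQvol]; exact ENNReal.pow_ne_top ENNReal.ofReal_ne_top
  set Bn : ℕ → Set (Fin d → ℝ) := fun n => Q \ ({x | g x ≤ (n : ℝ)} \ D) with hBn
  have hBnmeas : ∀ n, MeasurableSet (Bn n) := by
    intro n
    exact hQmeas.diff ((hg measurableSet_Iic).diff hDmeas)
  have hBnanti : Antitone Bn := by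
    intro n m hnm x hx
    have hcast : (n : ℝ) ≤ (m : ℝ) := Nat.cast_le.mpr hnm
    refine ⟨hx.1, fun hc => hx.2 ⟨le_trans hc.1 hcast, hc.2⟩⟩
  have hInter : (⋂ n, Bn n) ⊆ D ∩ P := by
    intro x hx
    simp only [Set.mem_iInter] at hx
    have hxQ : x ∈ Q := (hx 0).1
    constructor
    · by_contra hxD
      obtain ⟨n, hn⟩ := exists_nat_ge (g x)
      exact (hx n).2 ⟨hn, hxD⟩
    · exact hQP hxQ
  have h0 : volume (⋂ n, Bn n) = 0 :=
    measure_mono_null hInter hDvol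
  have htend : Tendsto (fun n => volume (Bn n)) atTop (𝓝 0) := by
    have := tendsto_measure_iInter_atTop (μ := volume) (fun n => (hBnmeas n).nullMeasurableSet)
      hBnanti ⟨0, by exact ne_top_of_le_ne_top hQfin (measure_mono Set.diff_subset)⟩
    rwa [h0] at this
  set εr : ℝ := (α / 2) ^ d / 2 ^ d with hεr
  have hεrpos : 0 < εr := by positivity
  have hε : (0 : ℝ≥0∞) < ENNReal.ofReal εr := ENNReal.ofReal_pos.mpr hεrpos
  obtain ⟨n, hn⟩ : ∃ n, volume (Bn n) < ENNReal.ofReal εr := by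
    have := htend.eventually (gt_mem_nhds hε)
    exact this.exists
  refine ⟨2 ^ d * n, by positivity, ?_⟩
  intro t ht
  set Bt : Set (Fin d → ℝ) := Set.pi Set.univ (fun i => Set.Ioo (0:ℝ) (t i)) with hBt
  have htpos : ∀ i, 0 < t i := fun i => lt_trans (by positivity) (ht i).1
  have hBtQ : Bt ⊆ Q := by
    intro u hu i _
    exact ⟨(hu i (Set.mem_univ i)).1, le_trans (hu i (Set.mem_univ i)).2.le (ht i).2⟩
  have hBtvol : volume Bt = ENNReal.ofReal (∏ i, t i) := by
    rw [hBt, volume_pi_pi]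
    simp only [Real.volume_Ioo, sub_zero]
    rw [← ENNReal.ofReal_prod_of_nonneg]
    intro i _
    exact (htpos i).le
  -- the reflection maps
  set Φ : Finset (Fin d) → (Fin d → ℝ) → (Fin d → ℝ) :=
    fun S u j => if j ∈ S then t j - u j else u j with hΦ
  have hΦmp : ∀ S, MeasurePreserving (Φ S) volume volume := by
    intro S
    have : ∀ j : Fin d, MeasurePreserving
        (fun a : ℝ => if j ∈ S then t j - a else a) volume volume := by
      intro j
      by_cases hj : j ∈ S
      · simp only [hj, if_true]
        exact Measure.measurePreserving_sub_left volume (t j)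
      · simp only [hj, if_false]
        exact MeasurePreserving.id _
    exact volume_preserving_pi this
  have hΦBt : ∀ S, ∀ u ∈ Bt, Φ S u ∈ Bt := by
    intro S u hu j _
    have hj := hu j (Set.mem_univ j)
    rw [hΦ]; dsimp only
    split
    · constructor <;> [linarith [hj.2]; linarith [hj.1]]
    · exact hj
  set bad : Finset (Fin d) → Set (Fin d → ℝ) := fun S => Bt ∩ (Φ S) ⁻¹' (Bn n) with hbad
  have hbadvol : ∀ S, volume (bad S) ≤ ENNReal.ofReal εr := by
    intro S
    calc volume (bad S) ≤ volume ((Φ S) ⁻¹' (Bn n)) := measure_mono Set.inter_subset_right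
      _ = volume (Bn n) := (hΦmp S).measure_preimage (hBnmeas n).nullMeasurableSet
      _ ≤ ENNReal.ofReal εr := hn.le
  have hsum : volume (⋃ S ∈ Finset.univ.powerset (α := Fin d), bad S)
      < volume Bt := by
    calc volume (⋃ S ∈ Finset.univ.powerset (α := Fin d), bad S)
        ≤ ∑ S ∈ Finset.univ.powerset (α := Fin d), volume (bad S) :=
          measure_biUnion_finset_le _ _
      _ ≤ (Finset.univ.powerset (α := Fin d)).card • ENNReal.ofReal εr :=
          Finset.sum_le_card_nsmul _ _ _ (fun S _ => hbadvol S)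
      _ = (2 ^ d : ℕ) * ENNReal.ofReal εr := by
          rw [Finset.card_powerset, Finset.card_univ, Fintype.card_fin, nsmul_eq_mul]
      _ = ENNReal.ofReal ((α / 2) ^ d) := by
          rw [← ENNReal.ofReal_natCast (2 ^ d), ← ENNReal.ofReal_mul (by positivity)]
          congr 1
          rw [hεr]
          push_cast
          field_simp
      _ < ENNReal.ofReal (∏ i, t i) := by
          apply ENNReal.ofReal_lt_ofReal_iff_of_nonneg (by positivity) |>.mpr
          have : (α / 2) ^ d = ∏ _i : Fin d, (α / 2) := by
            rw [Finset.prod_const, Finset.card_univ, Fintype.card_fin]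
          rw [this]
          exact Finset.prod_lt_prod_of_nonempty (fun i _ => by positivity)
            (fun i _ => (ht i).1) Finset.univ_nonempty
      _ = volume Bt := hBtvol.symm
  obtain ⟨u, huBt, hugood⟩ : ∃ u ∈ Bt, u ∉ ⋃ S ∈ Finset.univ.powerset (α := Fin d), bad S := by
    by_contra hc
    push_neg at hc
    exact absurd (measure_mono hc) (not_le.mpr hsum)
  have hupos : ∀ j, 0 < u j := fun j => (huBt j (Set.mem_univ j)).1
  have hfΦ : ∀ S ∈ Finset.univ.powerset (α := Fin d), f (Φ S u) ≤ (n : ℝ) := by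
    intro S hS
    have h1 : Φ S u ∈ Bt := hΦBt S u huBt
    have h2 : Φ S u ∉ Bn n := by
      intro hc
      exact hugood (Set.mem_biUnion hS ⟨huBt, hc⟩)
    have h3 : Φ S u ∈ Q := hBtQ h1
    have h4 : Φ S u ∈ {x | g x ≤ (n : ℝ)} \ D := by
      by_contra hc
      exact h2 ⟨h3, hc⟩
    have h5 : f (Φ S u) = g (Φ S u) := by
      by_contra hc
      exact h4.2 (hDsub hc)
    rw [h5]
    exact h4.1
  -- apply the mix inequality with x = u, y = t - u
  have hy : ∀ j, 0 < t j - u j := fun j => by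
    have := (huBt j (Set.mem_univ j)).2; linarith
  have hmix := csub_mix hf Finset.univ u (fun j => t j - u j) hupos hy
  have hteq : (fun j => if j ∈ (Finset.univ : Finset (Fin d)) then u j + (t j - u j) else u j)
      = t := by
    funext j; simp
  rw [hteq] at hmix
  have hΦeq : ∀ S : Finset (Fin d),
      (fun j => if j ∈ S then t j - u j else u j) = Φ S u := by
    intro S; rfl
  calc f t ≤ ∑ S ∈ Finset.univ.powerset (α := Fin d),
        f (fun j => if j ∈ S then t j - u j else u j) := hmix
    _ ≤ ∑ S ∈ Finset.univ.powerset (α := Fin d), (n : ℝ) := by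
        apply Finset.sum_le_sum
        intro S hS
        rw [hΦeq S]
        exact hfΦ S hS
    _ = 2 ^ d * n := by
        rw [Finset.sum_const, Finset.card_powerset, Finset.card_univ, Fintype.card_fin,
          nsmul_eq_mul]
        push_cast
        ring

theorem csub_aux (d : ℕ) (hd : 1 ≤ d) (f : (Fin d → ℝ) → ℝ)
    (hf : ∀ (i : Fin d) (x : Fin d → ℝ) (y : ℝ), (∀ j, 0 < x j) → 0 < y →
      f (Function.update x i (x i + y)) ≤ f x + f (Function.update x i y))
    (hmeas : AEMeasurable f (volume.restrict {x : Fin d → ℝ | ∀ i, 0 < x i})) :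
    ∀ K : Set (Fin d → ℝ), K ⊆ {x | ∀ i, 0 < x i} → IsCompact K →
      ∃ M : ℝ, ∀ x ∈ K, |f x| ≤ M := by
  classical
  intro K hKP hK
  rcases K.eq_empty_or_nonempty with rfl | hne
  · exact ⟨0, by simp⟩
  haveI : Nonempty (Fin d) := ⟨⟨0, hd⟩⟩
  obtain ⟨x₀, hx₀⟩ := hne
  -- bounds per coordinate
  have hcoord : ∀ i : Fin d, ∃ a b : ℝ, 0 < a ∧ ∀ x ∈ K, a ≤ x i ∧ x i ≤ b := by
    intro i
    obtain ⟨xm, hxm, hmin⟩ := hK.exists_isMinOn ⟨x₀, hx₀⟩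
      (continuous_apply i).continuousOn
    obtain ⟨xM, hxM, hmax⟩ := hK.exists_isMaxOn ⟨x₀, hx₀⟩
      (continuous_apply i).continuousOn
    exact ⟨xm i, xM i, hKP hxm i, fun x hx => ⟨hmin hx, hmax hx⟩⟩
  choose a b ha hab using hcoord
  set α : ℝ := Finset.univ.inf' Finset.univ_nonempty a with hαdef
  set β : ℝ := Finset.univ.sup' Finset.univ_nonempty b with hβdef
  have hα : 0 < α := by
    rw [hαdef, Finset.lt_inf'_iff]
    exact fun i _ => ha i
  have hKbox : ∀ x ∈ K, ∀ i, α ≤ x i ∧ x i ≤ β := by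
    intro x hx i
    constructor
    · exact le_trans (Finset.inf'_le a (Finset.mem_univ i)) (hab i x hx).1
    · exact le_trans (hab i x hx).2 (Finset.le_sup' b (Finset.mem_univ i))
  have hαβ : α ≤ β := by
    obtain ⟨i⟩ := ‹Nonempty (Fin d)›
    exact le_trans (hKbox x₀ hx₀ i).1 (hKbox x₀ hx₀ i).2
  obtain ⟨C, hC0, hbox⟩ := csub_box_bound hd hf hmeas hα
  set C₁ : ℝ := (β / α + 1) ^ d * C with hC₁def
  have hb1 : (0:ℝ) ≤ β / α + 1 := add_nonneg (div_nonneg (le_trans hα.le hαβ) hα.le) zero_le_one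
  have hC₁0 : 0 ≤ C₁ := mul_nonneg (pow_nonneg hb1 d) hC0
  -- upper bound on [α, β]^d by rescaling coordinates one at a time
  have hup : ∀ T : Finset (Fin d), ∀ x : Fin d → ℝ, (∀ j, 0 < x j) →
      (∀ i ∈ T, α ≤ x i ∧ x i ≤ β) → (∀ i ∉ T, α / 2 < x i ∧ x i ≤ α) →
      f x ≤ (β / α + 1) ^ T.card * C := by
    intro T
    induction T using Finset.induction_on with
    | empty =>
      intro x hxpos hxT hxbox
      simpa using hbox x (fun i => hxbox i (Finset.notMem_empty i))
    | @insert i T hiT ih =>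
      intro x hxpos hxT hxbox
      have hxi : α ≤ x i ∧ x i ≤ β := hxT i (Finset.mem_insert_self i T)
      set k : ℕ := ⌈x i / α⌉₊ with hkdef
      have hxiα : 1 ≤ x i / α := (one_le_div hα).mpr hxi.1
      have hk1 : 1 ≤ k := Nat.one_le_ceil_iff.mpr (by linarith)
      have hkpos : (0:ℝ) < k := by exact_mod_cast hk1
      have hkub : (k : ℝ) < x i / α + 1 := Nat.ceil_lt_add_one (by linarith)
      have hklb : x i / α ≤ (k : ℝ) := Nat.le_ceil _
      have hkle : (k : ℝ) ≤ β / α + 1 := by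
        have hdd : x i / α ≤ β / α := by
          gcongr
          exact hxi.2
        linarith
      set s : ℝ := x i / k with hsdef
      have hs : 0 < s := by
        have := lt_of_lt_of_le hα hxi.1
        positivity
      have hsle : s ≤ α := by
        rw [hsdef, div_le_iff₀ hkpos]
        calc x i = (x i / α) * α := by field_simp
          _ ≤ (k:ℝ) * α := by nlinarith
          _ = α * k := by ring
      have hslb : α / 2 < s := by
        rw [hsdef, lt_div_iff₀ hkpos]
        have h2 : (k : ℝ) < 2 * (x i / α) := by linarith
        calc α / 2 * k < α / 2 * (2 * (x i / α)) := by
              apply mul_lt_mul_of_pos_left h2 (by positivity)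
          _ = x i := by field_simp
      have hxupd : x = Function.update x i ((k : ℝ) * s) := by
        have : (k : ℝ) * s = x i := by
          rw [hsdef]; field_simp
        rw [this, Function.update_eq_self]
      set z : Fin d → ℝ := Function.update x i s with hzdef
      have hzpos : ∀ j, 0 < z j := by
        intro j
        rcases eq_or_ne j i with rfl | hji
        · rw [hzdef, Function.update_self]; exact hs
        · rw [hzdef, Function.update_of_ne hji]; exact hxpos j
      have hzT : ∀ j ∈ T, α ≤ z j ∧ z j ≤ β := by
        intro j hj
        have hji : j ≠ i := fun h => hiT (h ▸ hj)
        rw [hzdef, Function.update_of_ne hji]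
        exact hxT j (Finset.mem_insert_of_mem hj)
      have hzbox : ∀ j, j ∉ T → α / 2 < z j ∧ z j ≤ α := by
        intro j hj
        rcases eq_or_ne j i with rfl | hji
        · rw [hzdef, Function.update_self]; exact ⟨hslb, hsle⟩
        · rw [hzdef, Function.update_of_ne hji]
          exact hxbox j (by simp [hji, hj])
      have hscale := csub_scale hf k hk1 x hxpos i s hs
      rw [← hxupd] at hscale
      have hzupd : Function.update x i s = z := rfl
      have hIH := ih z hzpos hzT hzbox
      calc f x ≤ (k : ℝ) * f z := hscale
        _ ≤ (k : ℝ) * ((β / α + 1) ^ T.card * C) := by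
            apply mul_le_mul_of_nonneg_left hIH hkpos.le
        _ ≤ (β / α + 1) * ((β / α + 1) ^ T.card * C) := by
            apply mul_le_mul_of_nonneg_right hkle (mul_nonneg (pow_nonneg hb1 _) hC0)
        _ = (β / α + 1) ^ (insert i T).card * C := by
            rw [Finset.card_insert_of_notMem hiT, pow_succ]
            ring
  have hupK : ∀ x ∈ K, f x ≤ C₁ := by
    intro x hx
    have := hup Finset.univ x (fun j => lt_of_lt_of_le hα (hKbox x hx j).1)
      (fun i _ => hKbox x hx i) (fun i hi => absurd (Finset.mem_univ i) hi)
    rwa [Finset.card_univ, Fintype.card_fin] at this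
  -- also the upper bound holds on all of [α,β]^d
  have hupbox : ∀ x : Fin d → ℝ, (∀ i, α ≤ x i ∧ x i ≤ β) → f x ≤ C₁ := by
    intro x hx
    have := hup Finset.univ x (fun j => lt_of_lt_of_le hα (hx j).1)
      (fun i _ => hx i) (fun i hi => absurd (Finset.mem_univ i) hi)
    rwa [Finset.card_univ, Fintype.card_fin] at this
  -- lower bound
  set c : Fin d → ℝ := fun _ => β + α with hcdef
  have hlow : ∀ x ∈ K, f c - 2 ^ d * C₁ ≤ f x := by
    intro x hx
    have hxpos : ∀ j, 0 < x j := fun j => lt_of_lt_of_le hα (hKbox x hx j).1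
    have hy : ∀ j, 0 < c j - x j := by
      intro j
      have := (hKbox x hx j).2
      rw [hcdef]; dsimp only; linarith
    have hmix := csub_mix hf Finset.univ x (fun j => c j - x j) hxpos hy
    have hceq : (fun j => if j ∈ (Finset.univ : Finset (Fin d)) then x j + (c j - x j) else x j)
        = c := by funext j; simp
    rw [hceq] at hmix
    have hempty : (∅ : Finset (Fin d)) ∈ Finset.univ.powerset (α := Fin d) := by simp
    have hsplit : ∑ S ∈ Finset.univ.powerset (α := Fin d),
          f (fun j => if j ∈ S then c j - x j else x j)
        = f (fun j => if j ∈ (∅ : Finset (Fin d)) then c j - x j else x j)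
          + ∑ S ∈ (Finset.univ.powerset (α := Fin d)).erase ∅,
              f (fun j => if j ∈ S then c j - x j else x j) :=
      (Finset.add_sum_erase _ _ hempty).symm
    have hmixempty : (fun j => if j ∈ (∅ : Finset (Fin d)) then c j - x j else x j) = x := by
      funext j; simp
    rw [hmixempty] at hsplit
    have hmix2 : f c ≤ f x + ∑ S ∈ (Finset.univ.powerset (α := Fin d)).erase ∅,
        f (fun j => if j ∈ S then c j - x j else x j) := le_trans hmix (le_of_eq hsplit)
    have hrest : ∑ S ∈ (Finset.univ.powerset (α := Fin d)).erase ∅,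
        f (fun j => if j ∈ S then c j - x j else x j) ≤ 2 ^ d * C₁ := by
      calc ∑ S ∈ (Finset.univ.powerset (α := Fin d)).erase ∅,
            f (fun j => if j ∈ S then c j - x j else x j)
          ≤ ∑ S ∈ (Finset.univ.powerset (α := Fin d)).erase ∅, C₁ := by
            apply Finset.sum_le_sum
            intro S hS
            apply hupbox
            intro j
            by_cases hj : j ∈ S
            · simp only [hj, if_true]
              have h1 := (hKbox x hx j).1
              have h2 := (hKbox x hx j).2
              rw [hcdef]; dsimp only
              constructor <;> linarith
            · simp only [hj, if_false]
              exact hKbox x hx j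
          _ = ((Finset.univ.powerset (α := Fin d)).erase ∅).card * C₁ := by
            rw [Finset.sum_const, nsmul_eq_mul]
          _ ≤ 2 ^ d * C₁ := by
            apply mul_le_mul_of_nonneg_right _ hC₁0
            have : ((Finset.univ.powerset (α := Fin d)).erase ∅).card
                ≤ (Finset.univ.powerset (α := Fin d)).card :=
              Finset.card_le_card (Finset.erase_subset _ _)
            rw [Finset.card_powerset, Finset.card_univ, Fintype.card_fin] at this
            calc (((Finset.univ.powerset (α := Fin d)).erase ∅).card : ℝ)
                ≤ (2 ^ d : ℕ) := by exact_mod_cast this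
              _ = 2 ^ d := by push_cast; ring
    linarith
  refine ⟨|f c| + 2 ^ d * C₁ + C₁, ?_⟩
  intro x hx
  rw [abs_le]
  have h2d : (0:ℝ) ≤ 2 ^ d * C₁ := by positivity
  constructor
  · have := hlow x hx
    have habs : -|f c| ≤ f c := neg_abs_le _
    linarith
  · have := hupK x hx
    have habs : (0:ℝ) ≤ |f c| := abs_nonneg _
    linarith

end Aux

/-- A componentwise subadditive, Lebesgue-measurable function defined on an open
orthant `ℝ_w` of `ℝ^d` (where `w ∈ {0,1}^d`, with `x i > 0` when `w i = false`
and `x i < 0` when `w i = true`) is bounded on every compact subset of `ℝ_w`. -/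
theorem componentwise_subadditive_bounded_on_compacts_orthant
    (d : ℕ) (hd : 1 ≤ d) (w : Fin d → Bool) (f : (Fin d → ℝ) → ℝ)
    (hf : ∀ (i : Fin d) (x : Fin d → ℝ) (y : ℝ),
      (∀ j, if w j then x j < 0 else 0 < x j) →
      (if w i then y < 0 else 0 < y) →
      f (Function.update x i (x i + y)) ≤ f x + f (Function.update x i y))
    (hmeas : AEMeasurable f
      (volume.restrict {x : Fin d → ℝ | ∀ i, if w i then x i < 0 else 0 < x i})) :
    ∀ K : Set (Fin d → ℝ), K ⊆ {x | ∀ i, if w i then x i < 0 else 0 < x i} →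
      IsCompact K → ∃ M : ℝ, ∀ x ∈ K, |f x| ≤ M := by
  classical
  intro K hKO hK
  set O : Set (Fin d → ℝ) := {x | ∀ i, if w i then x i < 0 else 0 < x i} with hO
  set σ : (Fin d → ℝ) → (Fin d → ℝ) := fun x i => if w i then -x i else x i with hσ
  have hσσ : ∀ x, σ (σ x) = x := by
    intro x; funext i; rw [hσ]; dsimp only
    by_cases h : w i <;> simp [h]
  have hσcont : Continuous σ := by
    apply continuous_pi
    intro i
    by_cases h : w i
    · simp only [hσ, h, if_true]
      exact (continuous_apply i).neg
    · simp only [hσ, h, if_false]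
      exact continuous_apply i
  have hσmp : MeasurePreserving σ (volume : Measure (Fin d → ℝ)) volume := by
    apply volume_preserving_pi (f := fun i (a : ℝ) => if w i then -a else a)
    intro i
    by_cases h : w i
    · simp only [h, if_true]
      exact Measure.measurePreserving_neg _
    · simp only [h, if_false]
      exact MeasurePreserving.id _
  have hOmeas : MeasurableSet O := by
    have : O = Set.pi Set.univ (fun i => if w i then Set.Iio (0:ℝ) else Set.Ioi 0) := by
      ext x
      simp only [hO, Set.mem_setOf_eq, Set.mem_pi, Set.mem_univ, forall_true_left]
      apply forall_congr'
      intro i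
      by_cases h : w i <;> simp [h]
    rw [this]
    apply MeasurableSet.univ_pi
    intro i
    by_cases h : w i <;> simp [h, measurableSet_Iio, measurableSet_Ioi]
  have hpre : σ ⁻¹' O = {x : Fin d → ℝ | ∀ i, 0 < x i} := by
    ext x
    simp only [Set.mem_preimage, hO, Set.mem_setOf_eq, hσ]
    apply forall_congr'
    intro i
    by_cases h : w i <;> simp [h]
  -- σ maps positive orthant points into O and conversely
  have hσupd : ∀ (x : Fin d → ℝ) (i : Fin d) (v : ℝ),
      σ (Function.update x i v) = Function.update (σ x) i (if w i then -v else v) := by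
    intro x i v
    funext j
    rcases eq_or_ne j i with rfl | hji
    · rw [Function.update_self, hσ]
      dsimp only
      rw [Function.update_self]
    · rw [Function.update_of_ne hji, hσ]
      dsimp only
      rw [Function.update_of_ne hji]
  set g : (Fin d → ℝ) → ℝ := f ∘ σ with hg
  have hg_subadd : ∀ (i : Fin d) (x : Fin d → ℝ) (y : ℝ), (∀ j, 0 < x j) → 0 < y →
      g (Function.update x i (x i + y)) ≤ g x + g (Function.update x i y) := by
    intro i x y hx hy
    have hσx : σ x ∈ O := by
      rw [← Set.mem_preimage, hpre]
      exact hx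
    set y' : ℝ := if w i then -y else y with hy'
    have hy'sign : if w i then y' < 0 else 0 < y' := by
      by_cases h : w i <;> simp [hy', h] <;> linarith
    have h1 := hf i (σ x) y' hσx hy'sign
    have e1 : σ (Function.update x i (x i + y)) = Function.update (σ x) i (σ x i + y') := by
      have hv : (if w i then -(x i + y) else x i + y) = σ x i + y' := by
        rw [hσ, hy']
        dsimp only
        by_cases h : w i <;> simp [h] <;> ring
      rw [hσupd, hv]
    have e2 : σ (Function.update x i y) = Function.update (σ x) i y' := by
      rw [hσupd, hy']
    rw [hg]
    simp only [Function.comp_apply]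
    rw [e1, e2]
    exact h1
  have hg_meas : AEMeasurable g (volume.restrict {x : Fin d → ℝ | ∀ i, 0 < x i}) := by
    rw [← hpre]
    exact hmeas.comp_quasiMeasurePreserving
      ((hσmp.restrict_preimage hOmeas).quasiMeasurePreserving)
  obtain ⟨M, hM⟩ := csub_aux d hd g hg_subadd hg_meas (σ '' K)
    (by
      rintro _ ⟨x, hx, rfl⟩
      have hxO : x ∈ O := hKO hx
      intro i
      have hi := hxO i
      rw [hσ]
      dsimp only
      by_cases h : w i <;> simp [h] at hi ⊢ <;> linarith)
    (hK.image hσcont)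
  refine ⟨M, fun x hx => ?_⟩
  have := hM (σ x) (Set.mem_image_of_mem σ hx)
  rwa [hg, Function.comp_apply, hσσ] at this
end
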